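/- arXiv:2003.09253 — 2 statements merged into one kernel-verified Lean document; each statement's English description precedes it below -/
import Mathlib

section
/- Let f(s,λ) = 1 + λ G(s) e^{-hs} and let s_cr = σ₀ + j ω_cr satisfy f(s_cr, λ_cr) = 0 with λ_cr > 0, ∂f/∂s(s_cr,λ_cr) ≠ 0. Then the crossing direction sgn(Re(-(∂f/∂λ)/(∂f/∂s))) at (s_cr, λ_cr) equals -sgn(φ'(ω_cr)), where φ is the continuous phase of G(σ₀+jω)e^{-h(σ₀+jω)}; in particular it depends only on ω_cr and not on λ_cr. -/
open Complex

/-!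
Writing `z = G'(s)/G(s) - h`, the crossing quotient `-(∂f/∂λ)/(∂f/∂s)` equals `-(λ z)⁻¹`, the
factors `G(s) e^{-hs}` cancelling. Since `Re w⁻¹ = Re w / |w|²` and `λ > 0`, its real part has
the sign of `-Re z`.
-/

theorem Real.sign_mul_of_pos {c : ℝ} (hc : 0 < c) (r : ℝ) : Real.sign (c * r) = Real.sign r := by
  rcases lt_trichotomy r 0 with hr | rfl | hr
  · rw [Real.sign_of_neg (mul_neg_of_pos_of_neg hc hr), Real.sign_of_neg hr]
  · rw [mul_zero]
  · rw [Real.sign_of_pos (mul_pos hc hr), Real.sign_of_pos hr]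

theorem Complex.sign_inv_re (z : ℂ) : Real.sign (z⁻¹).re = Real.sign z.re := by
  rcases eq_or_ne z 0 with rfl | hz
  · simp
  rw [inv_re, div_eq_inv_mul, Real.sign_mul_of_pos (inv_pos.2 (normSq_pos.2 hz))]

theorem Complex.sign_ofReal_mul_re {c : ℝ} (hc : 0 < c) (z : ℂ) :
    Real.sign ((c : ℂ) * z).re = Real.sign z.re := by
  rw [re_ofReal_mul, Real.sign_mul_of_pos hc]

theorem Complex.div_mul_sub_mul_eq_inv {a b e l : ℂ} (h : ℂ) (ha : a ≠ 0) (he : e ≠ 0) :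
    a * e / (l * (b - h * a) * e) = (l * (b / a - h))⁻¹ := by
  rw [mul_div_mul_right _ _ he]
  field_simp

theorem stmt_9_general (G : ℂ → ℂ) (h lam : ℝ) (hlam : 0 < lam)
    (s_cr : ℂ)
    (hGne : G s_cr ≠ 0) :
    Real.sign
      ((-((G s_cr * Complex.exp (-(h : ℂ) * s_cr)) /
          ((lam : ℂ) * (deriv G s_cr - (h : ℂ) * G s_cr) *
            Complex.exp (-(h : ℂ) * s_cr)))).re)
      = -Real.sign ((deriv G s_cr / G s_cr - (h : ℂ)).re) := by
  rw [div_mul_sub_mul_eq_inv (h : ℂ) hGne (exp_ne_zero _), neg_re, Real.sign_neg, sign_inv_re,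
    sign_ofReal_mul_re hlam]

/-- Theorem 4: the crossing direction of a boundary crossing root equals
−sgn(φ'(ω_cr)), where φ'(ω_cr) = Re(G'(s_cr)/G(s_cr) − h). -/
theorem stmt_9 (G : ℂ → ℂ) (h σ₀ ω_cr lam : ℝ) (hh : 0 < h) (hlam : 0 < lam)
    (s_cr : ℂ) (hs : s_cr = (σ₀ : ℂ) + (ω_cr : ℂ) * Complex.I)
    (hG : DifferentiableAt ℂ G s_cr) (hGne : G s_cr ≠ 0)
    (hroot : 1 + (lam : ℂ) * G s_cr * Complex.exp (-(h : ℂ) * s_cr) = 0)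
    (hfs : deriv G s_cr - (h : ℂ) * G s_cr ≠ 0)
    (hφ' : (deriv G s_cr / G s_cr - (h : ℂ)).re ≠ 0) :
    Real.sign
      ((-((G s_cr * Complex.exp (-(h : ℂ) * s_cr)) /
          ((lam : ℂ) * (deriv G s_cr - (h : ℂ) * G s_cr) *
            Complex.exp (-(h : ℂ) * s_cr)))).re)
      = -Real.sign ((deriv G s_cr / G s_cr - (h : ℂ)).re) :=
  stmt_9_general G h lam hlam s_cr hGne
end

section
/- Suppose G is biproper with d := lim_{|s|→∞} G(s) ≠ 0, h > 0, σ₀ < 0, and 0 < λ < e^{h σ₀}/|d|. Then there exists R > 0 such that every root s of 1 + λ G(s) e^{-hs} = 0 with Re(s) ≥ σ₀ satisfies |s| ≤ R; in particular the root-locus region {Re(s) ≥ σ₀} contains only finitely many roots. -/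
/-!
At a root `s`, `λ ‖G s‖ = exp (h Re s) ≥ exp (h σ₀)` on the half-plane `σ₀ ≤ Re s`, whereas
`λ ‖G s‖ → λ |d| < exp (h σ₀)` as `‖s‖ → ∞`; hence the roots there are bounded. Clearing the
denominator, the roots are zeros of the entire function `∏ (s - pᵢ) + λ d ∏ (s - z_r) e^{-hs}`,
which does not vanish at large real `s`, so by the identity theorem only finitely many of them
lie in a closed disc.
-/

open Complex Filter Bornology Topology

section RationalAtInfinity

variable {𝕜 ι : Type*} [NormedField 𝕜]

theorem tendsto_sub_div_sub_cobounded (a b : 𝕜) :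
    Tendsto (fun s : 𝕜 => (s - a) / (s - b)) (cobounded 𝕜) (𝓝 1) := by
  have hinv : Tendsto (fun s : 𝕜 => (s - b)⁻¹) (cobounded 𝕜) (𝓝 0) :=
    tendsto_inv₀_cobounded.comp (tendsto_sub_const_cobounded b)
  have hlim : Tendsto (fun s : 𝕜 => 1 + (b - a) * (s - b)⁻¹) (cobounded 𝕜) (𝓝 1) := by
    simpa using (hinv.const_mul (b - a)).const_add 1
  refine hlim.congr' ?_
  filter_upwards [(tendsto_sub_const_cobounded b).eventually_ne_cobounded 0] with s hs
  field_simp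
  ring

theorem tendsto_prod_sub_div_prod_sub_cobounded [Fintype ι] (z p : ι → 𝕜) :
    Tendsto (fun s : 𝕜 => (∏ i, (s - z i)) / ∏ i, (s - p i)) (cobounded 𝕜) (𝓝 1) := by
  simpa [Finset.prod_div_distrib] using
    tendsto_finsetProd Finset.univ fun i _ => tendsto_sub_div_sub_cobounded (z i) (p i)

theorem eventually_prod_sub_ne_zero_cobounded [Fintype ι] (p : ι → 𝕜) :
    ∀ᶠ s in cobounded 𝕜, ∏ i, (s - p i) ≠ 0 := by
  simpa [Finset.prod_ne_zero_iff, sub_eq_zero] using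
    eventually_all.2 fun i => eventually_ne_cobounded (p i)

end RationalAtInfinity

theorem AnalyticOnNhd.finite_inter_preimage_zero {𝕜 E : Type*} [NontriviallyNormedField 𝕜]
    [ConnectedSpace 𝕜] [NormedAddCommGroup E] [NormedSpace 𝕜 E] {f : 𝕜 → E}
    (hf : AnalyticOnNhd 𝕜 f Set.univ) {x : 𝕜} (hx : f x ≠ 0) {K : Set 𝕜} (hK : IsCompact K) :
    (K ∩ f ⁻¹' {0}).Finite := by
  by_contra hinf
  obtain ⟨x₀, -, hacc⟩ :=
    Set.Infinite.exists_accPt_of_subset_isCompact hinf hK Set.inter_subset_left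
  have hfreq : ∃ᶠ y in 𝓝[≠] x₀, f y = 0 :=
    (accPt_iff_frequently_nhdsNE.1 hacc).mono fun y hy => hy.2
  exact hx (congrFun (hf.eq_of_frequently_eq analyticOnNhd_const hfreq) x)

section DelayRoots

variable {lam h σ₀ : ℝ}

theorem norm_mul_eq_exp_of_one_add_mul_exp_eq_zero (hlam : 0 < lam) {g s : ℂ}
    (hroot : 1 + lam * g * exp (-h * s) = 0) : lam * ‖g‖ = Real.exp (h * s.re) := by
  have hneg : lam * g * exp (-h * s) = -1 := by linear_combination hroot
  have hnorm := congrArg norm hneg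
  simp only [neg_mul, norm_mul, norm_real, Real.norm_of_nonneg hlam.le, norm_exp, neg_re, mul_re,
    ofReal_re, ofReal_im, zero_mul, sub_zero, norm_neg, norm_one] at hnorm
  rw [Real.exp_neg] at hnorm
  field_simp at hnorm
  exact hnorm

theorem one_add_mul_exp_ne_zero (hlam : 0 < lam) (hh : 0 ≤ h) {g s : ℂ} (hs : σ₀ ≤ s.re)
    (hg : lam * ‖g‖ < Real.exp (h * σ₀)) : 1 + lam * g * exp (-h * s) ≠ 0 := fun hroot => by
  have hnorm := norm_mul_eq_exp_of_one_add_mul_exp_eq_zero hlam hroot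
  have hexp : Real.exp (h * σ₀) ≤ Real.exp (h * s.re) := by gcongr
  linarith

theorem eventually_cobounded_one_add_mul_exp_ne_zero (hlam : 0 < lam) (hh : 0 ≤ h)
    {G : ℂ → ℂ} {d : ℂ} (hG : Tendsto G (cobounded ℂ) (𝓝 d))
    (hd : lam * ‖d‖ < Real.exp (h * σ₀)) :
    ∀ᶠ s in cobounded ℂ, σ₀ ≤ s.re → 1 + lam * G s * exp (-h * s) ≠ 0 :=
  ((hG.norm.const_mul lam).eventually (gt_mem_nhds hd)).mono fun _ hs hre =>
    one_add_mul_exp_ne_zero hlam hh hre hs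

end DelayRoots

theorem finite_inter_setOf_one_add_mul_rational_mul_exp_eq_zero {ι : Type*} [Fintype ι]
    {c lam w : ℂ} {z p : ι → ℂ} {G : ℂ → ℂ}
    (hG : ∀ s, G s = c * (∏ r, (s - z r)) / ∏ i, (s - p i)) {s₀ : ℂ}
    (hpole : ∏ i, (s₀ - p i) ≠ 0) (hs₀ : 1 + lam * G s₀ * exp (w * s₀) ≠ 0)
    {K : Set ℂ} (hK : IsCompact K) :
    (K ∩ {s | 1 + lam * G s * exp (w * s) = 0}).Finite := by
  set F : ℂ → ℂ := fun s => ∏ i, (s - p i) + lam * c * (∏ r, (s - z r)) * exp (w * s)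
  have hF : ∀ s, ∏ i, (s - p i) ≠ 0 →
      F s = (∏ i, (s - p i)) * (1 + lam * G s * exp (w * s)) := by
    intro s hs
    simp only [F, hG]
    field_simp
  have hFan : AnalyticOnNhd ℂ F Set.univ := analyticOnNhd_univ_iff_differentiable.2 (by fun_prop)
  have hFs₀ : F s₀ ≠ 0 := by
    rw [hF s₀ hpole]
    exact mul_ne_zero hpole hs₀
  refine (hFan.finite_inter_preimage_zero hFs₀ hK).subset ?_
  rintro s ⟨hsK, hroot⟩
  have hs : ∏ i, (s - p i) ≠ 0 := fun h0 => by simp [hG, h0] at hroot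
  exact ⟨hsK, show F s = 0 by rw [hF s hs, hroot, mul_zero]⟩

theorem stmt_14_general (n : ℕ) (α : ℝ) (hα : α ≠ 0) (h σ₀ lam : ℝ)
    (hh : 0 < h)
    (hlam : 0 < lam) (hlam' : lam < Real.exp (h * σ₀) / |α|)
    (z p : Fin n → ℂ)
    (G : ℂ → ℂ)
    (hG : ∀ s : ℂ, G s = (α : ℂ) * (∏ r, (s - z r)) / ∏ i, (s - p i)) :
    (∃ R > 0, ∀ s : ℂ, σ₀ ≤ s.re →
        1 + (lam : ℂ) * G s * Complex.exp (-(h : ℂ) * s) = 0 →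
        ‖s‖ ≤ R) ∧
    Set.Finite {s : ℂ | σ₀ ≤ s.re ∧
        1 + (lam : ℂ) * G s * Complex.exp (-(h : ℂ) * s) = 0} := by
  have hGlim : Tendsto G (cobounded ℂ) (𝓝 α) := by
    have hlim := (tendsto_prod_sub_div_prod_sub_cobounded z p).const_mul (α : ℂ)
    rw [mul_one] at hlim
    exact hlim.congr fun s => by rw [hG, mul_div_assoc]
  have hsmall : lam * ‖(α : ℂ)‖ < Real.exp (h * σ₀) := by
    rwa [norm_real, Real.norm_eq_abs, ← lt_div_iff₀ (abs_pos.2 hα)]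
  obtain ⟨R, hR⟩ : ∃ R, ∀ s : ℂ, R ≤ ‖s‖ →
      (σ₀ ≤ s.re → 1 + lam * G s * exp (-h * s) ≠ 0) ∧ ∏ i, (s - p i) ≠ 0 := by
    simpa using atTop_basis.cobounded_of_norm.eventually_iff.1 <|
      (eventually_cobounded_one_add_mul_exp_ne_zero hlam hh.le hGlim hsmall).and
        (eventually_prod_sub_ne_zero_cobounded p)
  have hbound : ∀ s : ℂ, σ₀ ≤ s.re → 1 + lam * G s * exp (-h * s) = 0 → ‖s‖ < R :=
    fun s hs hroot => not_le.1 fun hRs => (hR s hRs).1 hs hroot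
  refine ⟨⟨max R 1, by positivity, fun s hs hroot =>
    (hbound s hs hroot).le.trans (le_max_left _ _)⟩, ?_⟩
  have ht : R ≤ ‖((max R σ₀ : ℝ) : ℂ)‖ := by
    rw [norm_real]
    exact (le_max_left _ _).trans (Real.le_norm_self _)
  refine (finite_inter_setOf_one_add_mul_rational_mul_exp_eq_zero hG (hR _ ht).2
    ((hR _ ht).1 (by simp)) (isCompact_closedBall 0 R)).subset ?_
  rintro s ⟨hs, hroot⟩
  exact ⟨mem_closedBall_zero_iff.2 (hbound s hs hroot).le, hroot⟩

/-- Remark 2: for a biproper plant and λ < e^{hσ₀}/|d|, all roots in the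
half-plane Re(s) ≥ σ₀ lie in a bounded set, and there are finitely many. -/
theorem stmt_14 (n : ℕ) (α : ℝ) (hα : α ≠ 0) (h σ₀ lam : ℝ)
    (hh : 0 < h) (hσ₀ : σ₀ < 0)
    (hlam : 0 < lam) (hlam' : lam < Real.exp (h * σ₀) / |α|)
    (z p : Fin n → ℂ)
    (G : ℂ → ℂ)
    (hG : ∀ s : ℂ, G s = (α : ℂ) * (∏ r, (s - z r)) / ∏ i, (s - p i)) :
    (∃ R > 0, ∀ s : ℂ, σ₀ ≤ s.re →
        1 + (lam : ℂ) * G s * Complex.exp (-(h : ℂ) * s) = 0 →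
        ‖s‖ ≤ R) ∧
    Set.Finite {s : ℂ | σ₀ ≤ s.re ∧
        1 + (lam : ℂ) * G s * Complex.exp (-(h : ℂ) * s) = 0} :=
  stmt_14_general n α hα h σ₀ lam hh hlam hlam' z p G hG
end
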